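/- arXiv:1909.03523 — 2 statements merged into one kernel-verified Lean document; each statement's English description precedes it below -/
import Mathlib

section
/- If a type T1 splits into T2 and T3 (splitType T1 T2 T3), and T1 is not disposable (i.e., T1 is possibly-owned and refers to an asset contract), then T2 is not disposable. -/
inductive Mode : Type
  | owned | unowned | shared
  | states : Finset ℕ → Mode
  deriving DecidableEq

inductive Ty : Type
  | unit
  | ref : ℕ → Mode → Ty
  deriving DecidableEq

def maybeOwned : Ty → Prop
  | .ref _ .owned => True
  | .ref _ (.states _) => True
  | _ => False

def notOwned : Ty → Prop
  | .unit => True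
  | .ref _ .unowned => True
  | .ref _ .shared => True
  | _ => False

def refersToAsset (isAsset : ℕ → Prop) : Ty → Prop
  | .ref C _ => isAsset C
  | .unit => False

def disposable (isAsset : ℕ → Prop) (T : Ty) : Prop :=
  notOwned T ∨ (maybeOwned T ∧ ¬ refersToAsset isAsset T)

def nonDisposable (isAsset : ℕ → Prop) (T : Ty) : Prop :=
  maybeOwned T ∧ refersToAsset isAsset T

inductive SplitType (isAsset : ℕ → Prop) : Ty → Ty → Ty → Prop
  | split_unowned (C : ℕ) (m : Mode) :
      SplitType isAsset (.ref C m) (.ref C m) (.ref C .unowned)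
  | split_shared (C : ℕ) :
      SplitType isAsset (.ref C .shared) (.ref C .shared) (.ref C .shared)
  | split_owned_shared (C : ℕ) (m : Mode) :
      ¬ isAsset C → maybeOwned (.ref C m) →
      SplitType isAsset (.ref C m) (.ref C .shared) (.ref C .shared)
  | split_unit : SplitType isAsset .unit .unit .unit

theorem split_nonDisposability (isAsset : ℕ → Prop) (T1 T2 T3 : Ty)
    (hsplit : SplitType isAsset T1 T2 T3) (hnd : nonDisposable isAsset T1) :
    nonDisposable isAsset T2 := by
  obtain ⟨hmo, ha⟩ := hnd
  cases hsplit with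
  | split_unowned C m => exact ⟨hmo, ha⟩
  | split_shared C => exact absurd hmo (by simp [maybeOwned])
  | split_owned_shared C m h _ => exact absurd ha h
  | split_unit => exact absurd hmo (by simp [maybeOwned])
end

section
/- Alias compatibility is preserved by taking supertypes in mode: if T is compatible with T' = (C, m') and m' <: m'' in the subpermission-extended order (where a state set S̄ is below Owned, any mode is below Unowned, and state-set inclusion gives subtyping), then T is compatible with (C, m''). -/
/-- Extended subpermission order on modes. -/
inductive ModeSub : Mode → Mode → Prop
  | refl (m : Mode) : ModeSub m m
  | statesSub {S S' : Finset ℕ} : S ⊆ S' → ModeSub (.states S) (.states S')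
  | statesOwned (S : Finset ℕ) : ModeSub (.states S) .owned
  | ownedShared : ModeSub .owned .shared
  | ownedUnowned : ModeSub .owned .unowned
  | toUnowned (m : Mode) : ModeSub m .unowned
  | trans {m1 m2 m3 : Mode} : ModeSub m1 m2 → ModeSub m2 m3 → ModeSub m1 m3

/-- Alias compatibility (for two references to the same contract `C`,
modeled by their modes). -/
inductive Compat : Mode → Mode → Prop
  | sym {m1 m2 : Mode} : Compat m1 m2 → Compat m2 m1
  | uu : Compat .unowned .unowned
  | us : Compat .unowned .shared
  | uo : Compat .unowned .owned
  | uStates (S : Finset ℕ) : Compat .unowned (.states S)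
  | ss : Compat .shared .shared

lemma compat_char {a b : Mode} (h : Compat a b) :
    a = .unowned ∨ b = .unowned ∨ (a = .shared ∧ b = .shared) := by
  induction h with
  | sym _ ih => tauto
  | _ => simp

lemma compat_unowned (m : Mode) : Compat Mode.unowned m := by
  cases m
  · exact .uo
  · exact .uu
  · exact .us
  · exact .uStates _

lemma sub_unowned_aux {a m : Mode} (h : ModeSub a m) : a = .unowned → m = .unowned := by
  induction h with
  | trans _ _ ih1 ih2 => intro hu; exact ih2 (ih1 hu)
  | _ => intro hu; first | exact hu | rfl | (cases hu)

lemma sub_of_unowned {m : Mode} (h : ModeSub Mode.unowned m) : m = .unowned :=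
  sub_unowned_aux h rfl

lemma sub_shared_aux {a m : Mode} (h : ModeSub a m) :
    a = .shared → m = .shared ∨ m = .unowned := by
  induction h with
  | @trans m1 m2 m3 h1 h2 ih1 ih2 =>
      intro hu
      rcases ih1 hu with h' | h'
      · exact ih2 h'
      · subst h'; right; exact sub_unowned_aux h2 rfl
  | _ => intro hu; first | (left; exact hu) | (left; rfl) | (right; rfl) | (cases hu)

lemma sub_of_shared {m : Mode} (h : ModeSub Mode.shared m) :
    m = .shared ∨ m = .unowned :=
  sub_shared_aux h rfl

theorem compat_of_supertype (T m' m'' : Mode)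
    (hc : Compat T m') (hsub : ModeSub m' m'') : Compat T m'' := by
  rcases compat_char hc with h | h | ⟨h1, h2⟩
  · subst h; exact compat_unowned _
  · subst h; rw [sub_of_unowned hsub]; exact hc
  · subst h1; subst h2
    rcases sub_of_shared hsub with h | h <;> subst h
    · exact .ss
    · exact .sym .us
end
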